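/- arXiv:2106.08679 — 2 statements merged into one kernel-verified Lean document; each statement's English description precedes it below -/
import Mathlib

section
/- With f(r) = (1 - 2mr²/K³)^{1/2}, m, K > 0, 2m < K, the Tolman III pressure p(r) = (3m/(4πK³))(f(r) - f(K))/(3f(K) - f(r)) is strictly positive for 0 ≤ r < K. -/
/-!
The surface value `f(K) = √(1 - 2m/K)` exceeds `1/3` exactly when `2m/K < 8/9`, and `f(r) ≤ 1`,
so the denominator `3 f(K) - f(r)` is positive; the numerator `f(r) - f(K)` is positive because
`f` is strictly decreasing on `[0, K]`.
-/

noncomputable def tolmanF (m K r : ℝ) : ℝ := √(1 - 2 * m * r ^ 2 / K ^ 3)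

lemma tolmanF_le_one {m K : ℝ} (hm : 0 ≤ m) (hK : 0 ≤ K) (r : ℝ) : tolmanF m K r ≤ 1 := by
  have : 0 ≤ 2 * m * r ^ 2 / K ^ 3 := by positivity
  exact Real.sqrt_le_one.2 (by linarith)

lemma tolmanF_self {K : ℝ} (hK : K ≠ 0) (m : ℝ) : tolmanF m K K = √(1 - 2 * m / K) := by
  unfold tolmanF
  congr 2
  field_simp

lemma one_third_lt_tolmanF_self {m K : ℝ} (hK : 0 < K) (h89 : 2 * m / K < 8 / 9) :
    1 / 3 < tolmanF m K K := by
  rw [tolmanF_self hK.ne', Real.lt_sqrt (by norm_num)]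
  linarith

lemma tolmanF_lt_tolmanF {m K r s : ℝ} (hm : 0 < m) (hK : 0 < K) (hr : 0 ≤ r) (hrs : r < s)
    (hs : 2 * m * s ^ 2 / K ^ 3 ≤ 1) : tolmanF m K s < tolmanF m K r := by
  have hsq : 2 * m * r ^ 2 / K ^ 3 < 2 * m * s ^ 2 / K ^ 3 := by
    gcongr
  exact Real.sqrt_lt_sqrt (by linarith) (by linarith)

theorem tolmanIII_pressure_positive_general (m K : ℝ) (hm : 0 < m) (hK : 0 < K)
    (h89 : 2 * m / K < 8 / 9) :
    ∀ r : ℝ, 0 ≤ r → r < K →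
      0 < (3 * m / (4 * Real.pi * K ^ 3)) *
        (Real.sqrt (1 - 2 * m * r ^ 2 / K ^ 3) - Real.sqrt (1 - 2 * m * K ^ 2 / K ^ 3)) /
        (3 * Real.sqrt (1 - 2 * m * K ^ 2 / K ^ 3) - Real.sqrt (1 - 2 * m * r ^ 2 / K ^ 3)) := by
  intro r hr hrK
  change 0 < 3 * m / (4 * Real.pi * K ^ 3) * (tolmanF m K r - tolmanF m K K) /
    (3 * tolmanF m K K - tolmanF m K r)
  have hsurface : 2 * m * K ^ 2 / K ^ 3 ≤ 1 := by
    rw [show 2 * m * K ^ 2 / K ^ 3 = 2 * m / K by field_simp]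
    linarith
  have hnum := tolmanF_lt_tolmanF hm hK hr hrK hsurface
  have hden : 0 < 3 * tolmanF m K K - tolmanF m K r := by
    linarith [one_third_lt_tolmanF_self hK h89, tolmanF_le_one hm.le hK.le r]
  have hconst : 0 < 3 * m / (4 * Real.pi * K ^ 3) := by positivity
  exact div_pos (mul_pos hconst (sub_pos.2 hnum)) hden

/-- The Tolman III pressure is strictly positive for 0 ≤ r < K
(under the assumption 2m/K < 8/9 ensuring positivity of the denominator). -/
theorem tolmanIII_pressure_positive (m K : ℝ) (hm : 0 < m) (hK : 0 < K)
    (h2m : 2 * m < K) (h89 : 2 * m / K < 8 / 9) :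
    ∀ r : ℝ, 0 ≤ r → r < K →
      0 < (3 * m / (4 * Real.pi * K ^ 3)) *
        (Real.sqrt (1 - 2 * m * r ^ 2 / K ^ 3) - Real.sqrt (1 - 2 * m * K ^ 2 / K ^ 3)) /
        (3 * Real.sqrt (1 - 2 * m * K ^ 2 / K ^ 3) - Real.sqrt (1 - 2 * m * r ^ 2 / K ^ 3)) :=
  tolmanIII_pressure_positive_general m K hm hK h89
end

section
/- With the Buchdahl I parameters B = κ^{1/2}(3κ - 4)/((2 + 3κ)(2κ - 2)^{1/2}) and K = 1/(2κ²m²(3κ - 2)), for κ > 4/3 and m > 0, the pressure p(r) = -(9K/(16π)) · [B(Kr² + 1)^{1/2}(2 - Kr²)^{1/2}(2Kr² + 1) + K²r⁴ - 1] / ((Kr² + 1)^{3/2}[B(2Kr² + 5)(2 - Kr²)^{1/2} + (Kr² + 1)^{3/2}]) vanishes at r = 2κm. -/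
open Real

lemma buchdahlI_K_mul_sq_eq {κ m K : ℝ} (hκ : κ ≠ 0) (hm : m ≠ 0)
    (hK : K = 1 / (2 * κ ^ 2 * m ^ 2 * (3 * κ - 2))) :
    K * (2 * κ * m) ^ 2 = 2 / (3 * κ - 2) := by
  rw [hK]
  field_simp

lemma sqrt_add_one_mul_sqrt_two_sub_eq {κ : ℝ} (hκ : 1 < κ) :
    √(2 / (3 * κ - 2) + 1) * √(2 - 2 / (3 * κ - 2)) = 3 * √κ * √(2 * κ - 2) / (3 * κ - 2) := by
  have hd : 0 < 3 * κ - 2 := by linarith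
  have hκκ : √κ ^ 2 = κ := sq_sqrt (by linarith)
  have hss : √(2 * κ - 2) ^ 2 = 2 * κ - 2 := sq_sqrt (by linarith)
  rw [← sqrt_mul (by positivity), ← sqrt_sq (by positivity : 0 ≤ 3 * √κ * √(2 * κ - 2) / (3 * κ - 2))]
  congr 1
  rw [div_pow, mul_pow, mul_pow, hκκ, hss]
  field_simp
  ring

theorem buchdahlI_numerator_eq_zero {κ B K r : ℝ} (hκ : 1 < κ)
    (hB : B = √κ * (3 * κ - 4) / ((2 + 3 * κ) * √(2 * κ - 2)))
    (hKr : K * r ^ 2 = 2 / (3 * κ - 2)) :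
    B * √(K * r ^ 2 + 1) * √(2 - K * r ^ 2) * (2 * K * r ^ 2 + 1) + K ^ 2 * r ^ 4 - 1 = 0 := by
  have hd : 0 < 3 * κ - 2 := by linarith
  have hs : √(2 * κ - 2) ≠ 0 := (sqrt_pos.2 (by linarith)).ne'
  have hκκ : √κ * √κ = κ := mul_self_sqrt (by linarith)
  -- With `x = K r²`, the `√(2κ - 2)` of `B` cancels and both `B √((x + 1)(2 - x)) (2x + 1)`
  -- and `1 - x²` equal `3κ(3κ - 4)/(3κ - 2)²`.
  rw [mul_assoc B, mul_assoc 2, show K ^ 2 * r ^ 4 = (K * r ^ 2) ^ 2 by ring, hKr,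
    sqrt_add_one_mul_sqrt_two_sub_eq hκ, hB]
  generalize √(2 * κ - 2) = s at hs ⊢
  field_simp
  linear_combination (3 * (3 * κ - 4) * (3 * κ + 2)) * hκκ

/-- The Buchdahl I pressure vanishes at r = 2κm for the matched parameters
B = √κ (3κ - 4)/((2 + 3κ)√(2κ - 2)) and K = 1/(2κ²m²(3κ - 2)), with κ > 4/3 and m > 0. -/
theorem buchdahlI_pressure_vanishes (κ m B K : ℝ) (hκ : 4 / 3 < κ) (hm : 0 < m)
    (hB : B = Real.sqrt κ * (3 * κ - 4) / ((2 + 3 * κ) * Real.sqrt (2 * κ - 2)))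
    (hK : K = 1 / (2 * κ ^ 2 * m ^ 2 * (3 * κ - 2))) :
    -(9 * K / (16 * Real.pi)) *
      ((B * Real.sqrt (K * (2 * κ * m) ^ 2 + 1) * Real.sqrt (2 - K * (2 * κ * m) ^ 2) *
            (2 * K * (2 * κ * m) ^ 2 + 1) + K ^ 2 * (2 * κ * m) ^ 4 - 1) /
        ((Real.sqrt (K * (2 * κ * m) ^ 2 + 1)) ^ 3 *
          (B * (2 * K * (2 * κ * m) ^ 2 + 5) * Real.sqrt (2 - K * (2 * κ * m) ^ 2)
            + (Real.sqrt (K * (2 * κ * m) ^ 2 + 1)) ^ 3))) = 0 := by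
  have hκ1 : 1 < κ := by linarith
  have hKr := buchdahlI_K_mul_sq_eq (by positivity) hm.ne' hK
  rw [buchdahlI_numerator_eq_zero hκ1 hB hKr, zero_div, mul_zero]
end
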